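/- Assume 0 ∈ A and every α ∈ A satisfies |α| ≤ 2. There is a constant C = C(n, φ) depending only on n and the natural basis (one may take C = (q+1)/σ_∞, where σ_∞ > 0 is the constant such that every v ∈ R^{q+1} with ‖v‖_∞ = 1 satisfies max_{x̂ ∈ B̄(0,1)} |v^T φ(x̂)| ≥ σ_∞) such that: if the poised Birkhoff interpolation data D is Λ-poised with respect to A in the ball B(y^0, Δ(Y)), then ‖M̂^{-1}‖₂ ≤ C Λ. -/

import Mathlib

noncomputable section

open Metric

/-- `ℝ^n` with the Euclidean norm. -/
abbrev E (n : ℕ) := EuclideanSpace ℝ (Fin n)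

/-- Partial derivative in coordinate `i`. -/
def pd {n : ℕ} (i : Fin n) (f : E n → ℝ) : E n → ℝ :=
  fun x => fderiv ℝ f x (EuclideanSpace.single i 1)

/-- Mixed partial derivative `∂^α` associated with the multi-index `α`. -/
def mpd {n : ℕ} (α : Fin n → ℕ) (f : E n → ℝ) : E n → ℝ :=
  (List.finRange n).foldr (fun i g => (pd i)^[α i] g) f

/-- The order `|α|` of a multi-index. -/
def mdeg {n : ℕ} (α : Fin n → ℕ) : ℕ := ∑ j, α j

/-- Index type for the natural basis of quadratic polynomials in `n` variables:
`1`, the `n` linear monomials, and the quadratic monomials indexed by unordered pairs.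
Its cardinality is `q + 1 = (n+1)(n+2)/2`. -/
abbrev BIdx (n : ℕ) := Unit ⊕ Fin n ⊕ Sym2 (Fin n)

/-- The natural basis `1, x_1, …, x_n, (1/2)x_1², x_1x_2, …, (1/2)x_n²` of `P_n^2`. -/
def natBasis {n : ℕ} : BIdx n → E n → ℝ
  | Sum.inl _ => fun _ => 1
  | Sum.inr (Sum.inl i) => fun x => x i
  | Sum.inr (Sum.inr s) => fun x =>
      Sym2.lift ⟨fun i j => (if i = j then (1:ℝ)/2 else 1) * (x i * x j), by
        intro a b
        by_cases h : a = b
        · subst h; ring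
        · simp only [if_neg h, if_neg (Ne.symm h)]; ring⟩ s

/-- The base point `y^0` of interpolation data. -/
def center {n : ℕ} (y : BIdx n → E n) : E n := y (Sum.inl ())

/-- `Δ(Y) = max_i ‖y^i − y^0‖`. -/
def rad {n : ℕ} (y : BIdx n → E n) : ℝ :=
  Finset.univ.sup' Finset.univ_nonempty fun i => ‖y i - center y‖

/-- The normalized points `ŷ^i = (y^i − y^0)/Δ(Y)`. -/
def yhat {n : ℕ} (y : BIdx n → E n) (i : BIdx n) : E n := (rad y)⁻¹ • (y i - center y)

/-- The normalized interpolation matrix `M̂_{ij} = (∂^{α^i} φ_j)(ŷ^i)`. -/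
def Mhat {n : ℕ} (y : BIdx n → E n) (α : BIdx n → Fin n → ℕ) : Matrix (BIdx n) (BIdx n) ℝ :=
  Matrix.of fun i j => mpd (α i) (natBasis j) (yhat y i)

/-- The quadratic polynomial with coefficient vector `v` in the natural basis. -/
def evalP {n : ℕ} (v : BIdx n → ℝ) : E n → ℝ := fun x => ∑ j, v j * natBasis j x

/-- `v` lists the coefficient vectors of the Birkhoff interpolation polynomials:
`∂^{α^{i'}} λ_i (ŷ^{i'}) = δ_{i i'}`. -/
def BirkhoffLam {n : ℕ} (y : BIdx n → E n) (α : BIdx n → Fin n → ℕ)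
    (v : BIdx n → BIdx n → ℝ) : Prop :=
  ∀ i i', mpd (α i') (evalP (v i)) (yhat y i') = if i = i' then 1 else 0

/-- The spectral (ℓ²-operator) norm of a real matrix. -/
def specNorm {ι : Type*} [Fintype ι] [DecidableEq ι] (M : Matrix ι ι ℝ) : ℝ :=
  ‖Matrix.toEuclideanCLM (𝕜 := ℝ) M‖

/-- `q + 1 = (n+1)(n+2)/2`. -/
def Q1 (n : ℕ) : ℕ := (n + 1) * (n + 2) / 2


/-! ### Auxiliary lemmas -/

lemma pd_contDiff {n : ℕ} (i : Fin n) {f : E n → ℝ} (hf : ContDiff ℝ (⊤ : ℕ∞) f) :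
    ContDiff ℝ (⊤ : ℕ∞) (pd i f) :=
  (hf.fderiv_right (mod_cast le_top)).clm_apply contDiff_const

lemma pd_sum {n : ℕ} (i : Fin n) {ι : Type*} [Fintype ι] (c : ι → ℝ) (F : ι → E n → ℝ)
    (hF : ∀ j, ContDiff ℝ (⊤ : ℕ∞) (F j)) :
    pd i (fun x => ∑ j, c j * F j x) = fun x => ∑ j, c j * pd i (F j) x := by
  funext x
  unfold pd
  rw [fderiv_fun_sum fun j _ => (((hF j).differentiable (by simp)) x).const_mul (c j),
    ContinuousLinearMap.sum_apply]
  refine Finset.sum_congr rfl fun j _ => ?_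
  rw [fderiv_const_mul (((hF j).differentiable (by simp)) x)]
  simp

lemma pd_iter_contDiff {n : ℕ} (i : Fin n) (k : ℕ) {f : E n → ℝ} (hf : ContDiff ℝ (⊤ : ℕ∞) f) :
    ContDiff ℝ (⊤ : ℕ∞) ((pd i)^[k] f) := by
  induction k generalizing f with
  | zero => exact hf
  | succ k ih => rw [Function.iterate_succ_apply]; exact ih (pd_contDiff i hf)

lemma pd_iter_sum {n : ℕ} (i : Fin n) (k : ℕ) {ι : Type*} [Fintype ι] (c : ι → ℝ)
    (F : ι → E n → ℝ) (hF : ∀ j, ContDiff ℝ (⊤ : ℕ∞) (F j)) :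
    (pd i)^[k] (fun x => ∑ j, c j * F j x) = fun x => ∑ j, c j * (pd i)^[k] (F j) x := by
  induction k generalizing F with
  | zero => simp
  | succ k ih =>
    rw [Function.iterate_succ_apply, pd_sum i c F hF,
      ih (fun j => pd i (F j)) (fun j => pd_contDiff i (hF j))]
    simp [Function.iterate_succ_apply]

lemma foldr_contDiff {n : ℕ} (a : Fin n → ℕ) (l : List (Fin n)) {f : E n → ℝ}
    (hf : ContDiff ℝ (⊤ : ℕ∞) f) :
    ContDiff ℝ (⊤ : ℕ∞) (l.foldr (fun i g => (pd i)^[a i] g) f) := by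
  induction l with
  | nil => exact hf
  | cons hd tl ih => exact pd_iter_contDiff hd (a hd) ih

lemma foldr_sum {n : ℕ} (a : Fin n → ℕ) (l : List (Fin n)) {ι : Type*} [Fintype ι]
    (c : ι → ℝ) (F : ι → E n → ℝ) (hF : ∀ j, ContDiff ℝ (⊤ : ℕ∞) (F j)) :
    l.foldr (fun i g => (pd i)^[a i] g) (fun x => ∑ j, c j * F j x)
      = fun x => ∑ j, c j * l.foldr (fun i g => (pd i)^[a i] g) (F j) x := by
  induction l with
  | nil => rfl
  | cons hd tl ih =>
    simp only [List.foldr_cons, ih]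
    exact pd_iter_sum hd (a hd) c _ (fun j => foldr_contDiff a tl (hF j))

lemma natBasis_contDiff {n : ℕ} (j : BIdx n) : ContDiff ℝ (⊤ : ℕ∞) (natBasis j) := by
  rcases j with u | i | s
  · exact contDiff_const
  · exact (EuclideanSpace.proj (𝕜 := ℝ) i).contDiff
  · induction s using Sym2.ind with
  | _ i j =>
    have h : natBasis (Sum.inr (Sum.inr s(i, j))) =
        fun x : E n => (if i = j then (1:ℝ)/2 else 1) * (x i * x j) := by
      funext x; simp [natBasis]
    rw [h]
    exact contDiff_const.mul
      (((EuclideanSpace.proj i).contDiff).mul ((EuclideanSpace.proj (𝕜 := ℝ) j).contDiff))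

lemma mpd_evalP {n : ℕ} (a : Fin n → ℕ) (c : BIdx n → ℝ) :
    mpd a (evalP c) = fun x => ∑ j, c j * mpd a (natBasis j) x := by
  unfold mpd evalP
  exact foldr_sum a _ c natBasis natBasis_contDiff

lemma mpd_zero {n : ℕ} (f : E n → ℝ) : mpd (fun _ => 0) f = f := by
  unfold mpd
  generalize List.finRange n = l
  induction l with
  | nil => rfl
  | cons hd tl ih => simpa using ih

lemma cardBIdx (n : ℕ) : Fintype.card (BIdx n) = Q1 n := by
  obtain ⟨k, hk⟩ := Nat.even_mul_succ_self n
  have e1 : (n + 1) * n = 2 * k := by rw [mul_comm]; omega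
  have e2 : (n + 1) * (n + 2) = 2 * (k + n + 1) := by nlinarith [hk]
  simp only [Q1, Fintype.card_sum, Fintype.card_unit, Fintype.card_fin, Sym2.card,
    Nat.choose_two_right, Fintype.card_fin]
  rw [Nat.add_sub_cancel, e1, e2, Nat.mul_div_cancel_left _ two_pos,
    Nat.mul_div_cancel_left _ two_pos]
  omega

lemma specNorm_le_card_mul {ι : Type*} [Fintype ι] [DecidableEq ι] (M : Matrix ι ι ℝ)
    (c : ℝ) (hc : 0 ≤ c) (h : ∀ i j, |M i j| ≤ c) :
    specNorm M ≤ (Fintype.card ι : ℝ) * c := by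
  unfold specNorm
  refine ContinuousLinearMap.opNorm_le_bound _ (by positivity) fun x => ?_
  set N : ℝ := (Fintype.card ι : ℝ) with hN
  have hN0 : 0 ≤ N := by positivity
  have key : ∀ i, ‖(Matrix.toEuclideanCLM (𝕜 := ℝ) M x) i‖ ≤ c * ∑ j, |x j| := by
    intro i
    have hxi : (Matrix.toEuclideanCLM (𝕜 := ℝ) M x) i = ∑ j, M i j * x j := by
      have h2 := congrFun (Matrix.ofLp_toEuclideanCLM (n := ι) (𝕜 := ℝ) M x) i
      simpa [Matrix.mulVec, dotProduct] using h2
    rw [hxi, Real.norm_eq_abs]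
    calc |∑ j, M i j * x j| ≤ ∑ j, |M i j * x j| := Finset.abs_sum_le_sum_abs _ _
      _ ≤ ∑ j, c * |x j| := Finset.sum_le_sum fun j _ => by
          rw [abs_mul]; exact mul_le_mul_of_nonneg_right (h i j) (abs_nonneg _)
      _ = c * ∑ j, |x j| := by rw [Finset.mul_sum]
  have hS2 : (∑ j, |x j|) ^ 2 ≤ N * ∑ j, (x j) ^ 2 := by
    simpa [sq_abs, hN] using
      sq_sum_le_card_mul_sum_sq (s := (Finset.univ : Finset ι)) (f := fun j => |x j|)
  have hx2 : ∑ j, (x j) ^ 2 = ‖x‖ ^ 2 := by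
    rw [EuclideanSpace.norm_eq, Real.sq_sqrt (by positivity)]
    simp [Real.norm_eq_abs, sq_abs]
  have hnn : 0 ≤ ∑ j, |x j| := Finset.sum_nonneg fun j _ => abs_nonneg _
  calc ‖Matrix.toEuclideanCLM (𝕜 := ℝ) M x‖
      = Real.sqrt (∑ i, ‖(Matrix.toEuclideanCLM (𝕜 := ℝ) M x) i‖ ^ 2) :=
        EuclideanSpace.norm_eq _
    _ ≤ Real.sqrt (∑ _i : ι, (c * ∑ j, |x j|) ^ 2) := by
        apply Real.sqrt_le_sqrt
        exact Finset.sum_le_sum fun i _ => pow_le_pow_left₀ (norm_nonneg _) (key i) 2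
    _ = Real.sqrt (N * (c * ∑ j, |x j|) ^ 2) := by
        rw [Finset.sum_const, Finset.card_univ, nsmul_eq_mul, hN]
    _ ≤ Real.sqrt (N * (c ^ 2 * (N * ‖x‖ ^ 2))) := by
        apply Real.sqrt_le_sqrt
        apply mul_le_mul_of_nonneg_left _ hN0
        rw [mul_pow]
        rw [← hx2]
        exact mul_le_mul_of_nonneg_left hS2 (by positivity)
    _ = N * c * ‖x‖ := by
        have : N * (c ^ 2 * (N * ‖x‖ ^ 2)) = (N * c * ‖x‖) ^ 2 := by ring
        rw [this, Real.sqrt_sq (by positivity)]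

/-- reverse direction: if the poised data `D` is `Λ`-poised with respect
to `A` in `B(y^0, Δ(Y))`, then `‖M̂⁻¹‖₂ ≤ C Λ` with `C = (q+1)/σ_∞`, where `σ_∞ > 0` is the
constant such that every `v` with `‖v‖_∞ = 1` satisfies `max_{x̂ ∈ B̄(0,1)} |vᵀφ(x̂)| ≥ σ_∞`. -/
theorem invnorm_le_of_lambda_poised {n : ℕ} (hn : 1 ≤ n)
    (y : BIdx n → E n) (α : BIdx n → Fin n → ℕ)
    (A : Finset (Fin n → ℕ)) (h0A : (fun _ => 0) ∈ A) (hA : ∀ a ∈ A, mdeg a ≤ 2)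
    (hrad : 0 < rad y) (hpoised : IsUnit (Mhat y α))
    (v : BIdx n → BIdx n → ℝ) (hv : BirkhoffLam y α v)
    (Λ σ : ℝ) (hσ : 0 < σ)
    (hσprop : ∀ w : BIdx n → ℝ, ‖w‖ = 1 →
      ∃ x ∈ closedBall (0 : E n) 1, σ ≤ |∑ j, w j * natBasis j x|)
    (hΛ : ∀ i : BIdx n, ∀ a ∈ A, ∀ x ∈ closedBall (center y) (rad y),
      |mpd a (evalP (v i)) ((rad y)⁻¹ • (x - center y))| ≤ Λ) :
    specNorm (Mhat y α)⁻¹ ≤ ((Q1 n : ℝ) / σ) * Λ := by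
  classical
  have hΛ0 : 0 ≤ Λ :=
    le_trans (abs_nonneg _)
      (hΛ (Sum.inl ()) _ h0A (center y) (Metric.mem_closedBall_self hrad.le))
  -- entrywise bound on the coefficient vectors
  have hentry : ∀ i j, |v i j| ≤ Λ / σ := by
    intro i j
    have hnorm : ‖v i‖ ≤ Λ / σ := by
      rcases eq_or_ne (v i) 0 with h | h
      · rw [h, norm_zero]; positivity
      · have hn0 : ‖v i‖ ≠ 0 := norm_ne_zero_iff.mpr h
        have hnp : 0 < ‖v i‖ := norm_pos_iff.mpr h
        set w : BIdx n → ℝ := ‖v i‖⁻¹ • v i with hw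
        have hw1 : ‖w‖ = 1 := by
          rw [hw, norm_smul, norm_inv, norm_norm, inv_mul_cancel₀ hn0]
        obtain ⟨xh, hxh, hσx⟩ := hσprop w hw1
        have hxh1 : ‖xh‖ ≤ 1 := by rwa [Metric.mem_closedBall, dist_zero_right] at hxh
        set x : E n := center y + (rad y) • xh with hxdef
        have hxball : x ∈ closedBall (center y) (rad y) := by
          rw [Metric.mem_closedBall, dist_eq_norm, hxdef]
          simp only [add_sub_cancel_left, norm_smul, Real.norm_eq_abs, abs_of_pos hrad]
          calc rad y * ‖xh‖ ≤ rad y * 1 := by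
                exact mul_le_mul_of_nonneg_left hxh1 hrad.le
            _ = rad y := mul_one _
        have hxs : (rad y)⁻¹ • (x - center y) = xh := by
          rw [hxdef]
          simp [smul_smul, inv_mul_cancel₀ hrad.ne']
        have hb := hΛ i _ h0A x hxball
        rw [hxs, mpd_zero] at hb
        have hsum : ∑ j, w j * natBasis j xh = ‖v i‖⁻¹ * evalP (v i) xh := by
          simp only [hw, Pi.smul_apply, smul_eq_mul, evalP, Finset.mul_sum, mul_assoc]
        rw [hsum, abs_mul, abs_of_nonneg (inv_nonneg.mpr (norm_nonneg _))] at hσx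
        rw [le_div_iff₀ hσ]
        calc ‖v i‖ * σ ≤ ‖v i‖ * (‖v i‖⁻¹ * |evalP (v i) xh|) :=
              mul_le_mul_of_nonneg_left hσx (norm_nonneg _)
          _ = |evalP (v i) xh| := by field_simp
          _ ≤ Λ := hb
    have := norm_le_pi_norm (v i) j
    rw [Real.norm_eq_abs] at this
    exact this.trans hnorm
  -- identify the inverse matrix
  have hinv : (Mhat y α)⁻¹ = (Matrix.of v).transpose := by
    apply Matrix.inv_eq_right_inv
    ext i' i
    have hvi := hv i i'
    rw [mpd_evalP] at hvi
    have h2 : ∑ j, Mhat y α i' j * (Matrix.of v).transpose j i = if i = i' then 1 else 0 := by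
      rw [← hvi]
      refine Finset.sum_congr rfl fun j _ => ?_
      simp [Mhat, mul_comm]
    rw [Matrix.mul_apply, h2, Matrix.one_apply]
    by_cases h : i = i'
    · simp [h]
    · simp [h, Ne.symm h]
  rw [hinv]
  have hb := specNorm_le_card_mul ((Matrix.of v).transpose) (Λ / σ) (by positivity)
    (fun i j => hentry j i)
  calc specNorm (Matrix.of v).transpose ≤ (Fintype.card (BIdx n) : ℝ) * (Λ / σ) := hb
    _ = ((Q1 n : ℝ) / σ) * Λ := by rw [cardBIdx]; ring
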